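/- arXiv:2302.04444 — 3 statements merged into one kernel-verified Lean document; each statement's English description precedes it below -/
import Mathlib

section
/- Let Γ be a weighted graph, σ ∈ Aut(Γ), v a vertex of C_Γ, and let α ∈ A_Γ be an automorphism with α(v) = v and constant local action σ(α,w) = σ for all vertices w. Then α fixes pointwise the set of all vertices w of C_Γ such that there is a path in C_Γ connecting w to v all of whose edge labels are fixed points of σ. -/
/-!
Setup for Cayley graphs of Coxeter groups.

A weighted graph `Γ = (VΓ, EΓ, m)` in the sense of the paper is encoded by a Mathlib
`CoxeterMatrix B` (`B = VΓ`): the weight `m x y` is `M x y`, where the entry `0` encodes `∞`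
(no relation / no edge).  The associated Coxeter group is `M.Group`, with standard generators
`M.simple x`.
-/

open CoxeterMatrix

variable {B : Type*}

/-- The automorphism group of a simple graph, as a subgroup of the permutation group
of its vertex set. -/
def graphAut {V : Type*} (G : SimpleGraph V) : Subgroup (Equiv.Perm V) where
  carrier := {σ | ∀ x y : V, G.Adj (σ x) (σ y) ↔ G.Adj x y}
  one_mem' := by intro x y; simp
  mul_mem' := by
    intro a b ha hb x y
    simpa [Equiv.Perm.mul_apply] using (ha (b x) (b y)).trans (hb x y)
  inv_mem' := by
    intro a ha x y
    simpa using (ha (a⁻¹ x) (a⁻¹ y)).symm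

/-- The group `Aut(Γ)` of weight-preserving automorphisms of the weighted graph encoded by the
Coxeter matrix `M`, as a subgroup of the permutation group of the vertex set. -/
def wAut (M : CoxeterMatrix B) : Subgroup (Equiv.Perm B) where
  carrier := {σ | ∀ x y : B, M (σ x) (σ y) = M x y}
  one_mem' := by intro x y; simp
  mul_mem' := by
    intro a b ha hb x y
    simpa [Equiv.Perm.mul_apply] using (ha (b x) (b y)).trans (hb x y)
  inv_mem' := by
    intro a ha x y
    simpa using (ha (a⁻¹ x) (a⁻¹ y)).symm

/-- The simplicial graph underlying a weighted graph (Coxeter matrix): distinct vertices `x, y`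
are adjacent iff the weight `M x y` is finite (recall that the entry `0` encodes `∞`). -/
def cGraph (M : CoxeterMatrix B) : SimpleGraph B where
  Adj x y := x ≠ y ∧ M x y ≠ 0
  symm := ⟨by
    rintro x y ⟨h1, h2⟩
    exact ⟨h1.symm, by rwa [M.symmetric y x]⟩⟩
  loopless := ⟨fun x h => h.1 rfl⟩

/-- The star of a vertex `x`: the vertex together with all its neighbours. -/
def starSet (M : CoxeterMatrix B) (x : B) : Set B := insert x ((cGraph M).neighborSet x)

/-- The Cayley graph `C_Γ` of the Coxeter group `W_Γ = M.Group` with respect to the standard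
generating set: `v` and `w` are adjacent iff `w = v * (M.simple x)` for some generator `x`
(the edge `{v, v * M.simple x}` is labelled by `x`). -/
def cayley (M : CoxeterMatrix B) : SimpleGraph M.Group where
  Adj v w := v ≠ w ∧ ∃ x : B, w = v * M.simple x
  symm := ⟨by
    rintro v w ⟨hne, x, rfl⟩
    refine ⟨hne.symm, x, ?_⟩
    have h : M.simple x * M.simple x = 1 := M.toCoxeterSystem.simple_mul_simple_self x
    rw [mul_assoc, h, mul_one]⟩
  loopless := ⟨fun v h => h.1 rfl⟩

/-- `τ : VΓ → VΓ` is the local action `σ(α, v)` of the (Cayley graph automorphism) `α` at the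
vertex `v`: for each generator `x`, `α` maps the edge `{v, v·x}` (labelled `x`) to the edge
`{α v, (α v)·(τ x)}` (labelled `τ x`). -/
def IsLocalAction (M : CoxeterMatrix B) (α : Equiv.Perm M.Group) (v : M.Group)
    (τ : B → B) : Prop :=
  ∀ x : B, α (v * M.simple x) = α v * M.simple (τ x)

/-- `Γ₁` is a factor associated with the separating set `S ⊊ VΓ`: the induced subgraph on
`VΓ ∖ S` is disconnected, and `Γ₁` is the union of `S` with a nonempty collection `C` of
connected components of `VΓ ∖ S` which omits at least one component (so `C` is a nonempty
union of components, closed under reachability, with nonempty complement in `VΓ ∖ S`). -/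
def IsFactor (M : CoxeterMatrix B) (S : Set B) (Γ₁ : Set B) : Prop :=
  S ≠ Set.univ ∧ ¬ ((cGraph M).induce Sᶜ).Connected ∧
  ∃ C : Set B, Γ₁ = S ∪ C ∧ C ⊆ Sᶜ ∧ C.Nonempty ∧ (Sᶜ \ C).Nonempty ∧
    (∀ x y : ↥(Sᶜ), ((cGraph M).induce Sᶜ).Reachable x y → (x : B) ∈ C → (y : B) ∈ C)

/-- `S` is a good separating set: some factor `Γ₁` associated with `S` carries a nontrivial
weight-preserving automorphism restricting to the identity on `S`. -/
def IsGoodSepSet (M : CoxeterMatrix B) (S : Set B) : Prop :=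
  ∃ Γ₁ : Set B, IsFactor M S Γ₁ ∧
    ∃ σ : Equiv.Perm ↥Γ₁, σ ≠ 1 ∧ (∀ a b : ↥Γ₁, M ((σ a : B)) ((σ b : B)) = M (a : B) (b : B)) ∧
      (∀ a : ↥Γ₁, (a : B) ∈ S → σ a = a)

/-- The permutation topology on a group of permutations of `V` (e.g. the automorphism group of a
graph with vertex set `V`): the topology of pointwise convergence, i.e. the topology induced from
the product topology on `V → V` where each factor carries the discrete topology.  Its basic open
neighbourhoods of the identity are the pointwise stabilisers of finite subsets of `V`. -/
def permTop {V : Type*} (H : Subgroup (Equiv.Perm V)) : TopologicalSpace ↥H :=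
  TopologicalSpace.induced (fun α => ((α : Equiv.Perm V) : V → V))
    (@Pi.topologicalSpace V (fun _ => V) (fun _ => ⊥))

open Classical in
/-- The weighted graph (Coxeter matrix) of a right-angled weighted graph: all edges of the
simplicial graph `G` get weight `2`. -/
noncomputable def ofGraph {V : Type*} (G : SimpleGraph V) : CoxeterMatrix V where
  M := Matrix.of fun x y => if x = y then 1 else if G.Adj x y then 2 else 0
  isSymm := by
    ext x y
    by_cases h : x = y
    · simp [Matrix.IsSymm, h]
    · simp only [Matrix.transpose_apply, Matrix.of_apply, if_neg h, if_neg (Ne.symm h)]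
      rw [G.adj_comm]
  diagonal i := by simp
  off_diagonal i j h := by
    simp only [Matrix.of_apply, if_neg h]
    split_ifs <;> simp

theorem IsLocalAction.apply_mul_simple_of_fixed {M : CoxeterMatrix B} {α : Equiv.Perm M.Group}
    {u : M.Group} {σ : B → B} (h : IsLocalAction M α u σ) (hu : α u = u) {x : B}
    (hx : σ x = x) : α (u * M.simple x) = u * M.simple x := by
  rw [h x, hu, hx]

theorem fixes_vertices_connected_by_fixed_labels_general {B : Type*} (M : CoxeterMatrix B)
    (σ : Equiv.Perm B) (v : M.Group) (α : Equiv.Perm M.Group)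
    (hfix : α v = v)
    (hloc : ∀ w : M.Group, IsLocalAction M α w σ) (w : M.Group)
    (hw : Relation.ReflTransGen (fun a b : M.Group => ∃ x : B, σ x = x ∧ b = a * M.simple x) v w) :
    α w = w := by
  induction hw with
  | refl => exact hfix
  | tail _ step ih =>
    obtain ⟨x, hx, rfl⟩ := step
    exact (hloc _).apply_mul_simple_of_fixed ih hx

theorem fixes_vertices_connected_by_fixed_labels {B : Type*} (M : CoxeterMatrix B)
    (σ : Equiv.Perm B) (hσ : σ ∈ wAut M) (v : M.Group) (α : Equiv.Perm M.Group)
    (hα : α ∈ graphAut (cayley M)) (hfix : α v = v)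
    (hloc : ∀ w : M.Group, IsLocalAction M α w σ) (w : M.Group)
    (hw : Relation.ReflTransGen (fun a b : M.Group => ∃ x : B, σ x = x ∧ b = a * M.simple x) v w) :
    α w = w :=
  fixes_vertices_connected_by_fixed_labels_general M σ v α hfix hloc w hw
end

section
/- Let Γ be a finite weighted simplicial graph. The following are equivalent: (1) there exist a vertex x ∈ VΓ and a nontrivial α ∈ Aut(Γ) such that α restricts to the identity on star(x); (2) Γ admits a good separating set; (3) there exist a separating set S ⊊ VΓ with corresponding factor Γ_1 and two distinct automorphisms α, β ∈ Aut(Γ_1) such that α and β agree on S. -/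
/-!
Setup for Cayley graphs of Coxeter groups.

A weighted graph `Γ = (VΓ, EΓ, m)` in the sense of the paper is encoded by a Mathlib
`CoxeterMatrix B` (`B = VΓ`): the weight `m x y` is `M x y`, where the entry `0` encodes `∞`
(no relation / no edge).  The associated Coxeter group is `M.Group`, with standard generators
`M.simple x`.
-/

open CoxeterMatrix

variable {B : Type*}

/-!
If a nontrivial automorphism `σ` fixes `star(x)` pointwise, then `link(x)` separates `x` from
the vertices moved by `σ`, and `σ` restricts to the factor `Γ ∖ {x}` fixing `link(x)`.
Conversely, an automorphism of a factor `Γ₁ = S ∪ C` fixing `S` preserves `C`, and `C` has no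
edges to the omitted components, so extending it by the identity gives an automorphism of `Γ`;
it fixes `star(x)` for any vertex `x` in an omitted component, as the neighbours of `x` in `Γ₁`
lie in `S`.
Two automorphisms of `Γ₁` agree on `S` exactly when their quotient fixes `S`.
-/

open Equiv

namespace CoxeterMatrix

/-- The weighted graph induced on `T`, so that `Aut(Γ₁)` is `wAut (M.restrict Γ₁)`. -/
def restrict (M : CoxeterMatrix B) (T : Set B) : CoxeterMatrix T where
  M := M.M.submatrix (↑) (↑)
  isSymm := by ext a b; exact M.symmetric b a
  diagonal a := M.diagonal a
  off_diagonal a b hab := M.off_diagonal a b (Subtype.coe_injective.ne hab)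

end CoxeterMatrix

theorem Equiv.Perm.exists_ne_one_fixing_iff {α : Type*} (H : Subgroup (Perm α)) (S : Set α) :
    (∃ σ ∈ H, σ ≠ 1 ∧ ∀ a ∈ S, σ a = a) ↔
      ∃ σ ∈ H, ∃ τ ∈ H, σ ≠ τ ∧ ∀ a ∈ S, σ a = τ a := by
  constructor
  · rintro ⟨σ, hσ, hσ1, hσS⟩
    exact ⟨σ, hσ, 1, H.one_mem, hσ1, hσS⟩
  · rintro ⟨σ, hσ, τ, hτ, hστ, hagree⟩
    refine ⟨τ⁻¹ * σ, H.mul_mem (H.inv_mem hτ) hσ, ?_, fun a ha => ?_⟩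
    · rwa [Ne, inv_mul_eq_one, eq_comm]
    · simp [hagree a ha]

theorem SimpleGraph.Reachable.eq_of_forall_not_adj {V : Type*} {G : SimpleGraph V} {x y : V}
    (h : G.Reachable x y) (hx : ∀ z, ¬ G.Adj x z) : x = y := by
  obtain ⟨_ | ⟨hadj, _⟩⟩ := h
  · rfl
  · exact absurd hadj (hx _)

section

variable (M : CoxeterMatrix B)

theorem eq_of_reachable_induce_compl_neighborSet {x : B} {a b : ↥((cGraph M).neighborSet x)ᶜ}
    (h : ((cGraph M).induce ((cGraph M).neighborSet x)ᶜ).Reachable a b) (ha : (a : B) = x) :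
    (b : B) = x := by
  obtain ⟨a, ha'⟩ := a
  dsimp only at ha
  subst ha
  exact (congrArg Subtype.val (h.eq_of_forall_not_adj fun z hz => z.2 hz)).symm

theorem isFactor_neighborSet {x u : B} (hu : u ∉ starSet M x) :
    IsFactor M ((cGraph M).neighborSet x) {x}ᶜ := by
  set S := (cGraph M).neighborSet x
  have hx : x ∈ Sᶜ := (cGraph M).loopless.irrefl x
  have hu' : u ≠ x ∧ u ∈ Sᶜ := not_or.mp hu
  refine ⟨fun h => hx (h ▸ Set.mem_univ x), fun hconn => ?_, (starSet M x)ᶜ, ?_, ?_, ⟨u, hu⟩,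
    ⟨x, hx, fun h => h (Set.mem_insert x _)⟩, ?_⟩
  · exact hu'.1 (eq_of_reachable_induce_compl_neighborSet M
      (hconn.preconnected ⟨x, hx⟩ ⟨u, hu'.2⟩) rfl)
  · ext b
    by_cases hb : b = x <;> simp [starSet, hb, S, em]
  · intro b hb
    simp_all [starSet, S]
  · rintro y z hyz hy hz
    have hzx : (z : B) = x := hz.resolve_right z.2
    rw [eq_of_reachable_induce_compl_neighborSet M hyz.symm hzx] at hy
    exact hy (Set.mem_insert x _)

theorem isGoodSepSet_neighborSet {x : B} {σ : Perm B} (hσ : σ ∈ wAut M) (hσ1 : σ ≠ 1)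
    (hstar : ∀ y ∈ starSet M x, σ y = y) : IsGoodSepSet M ((cGraph M).neighborSet x) := by
  classical
  obtain ⟨u, hu⟩ : ∃ u, σ u ≠ u := not_forall.mp fun h => hσ1 (Equiv.ext h)
  have hx : σ x = x := hstar x (Set.mem_insert x _)
  have hσx : ∀ b, σ b ∈ ({x}ᶜ : Set B) ↔ b ∈ ({x}ᶜ : Set B) := fun b =>
    not_congr (by simpa only [Set.mem_singleton_iff, hx] using σ.apply_eq_iff_eq (x := b) (y := x))
  refine ⟨{x}ᶜ, isFactor_neighborSet M fun h => hu (hstar u h), σ.subtypePerm hσx, fun h => ?_,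
    fun a b => hσ a b, fun a ha => Subtype.ext (hstar a (Set.mem_insert_of_mem x ha))⟩
  apply hσ1
  rw [← Perm.ofSubtype_subtypePerm hσx fun b hb hbx => hb (hbx ▸ hx), h, map_one]

theorem weight_eq_zero_of_reachable_closed {S C : Set B} (hCS : C ⊆ Sᶜ)
    (hC : ∀ a b : ↥Sᶜ, ((cGraph M).induce Sᶜ).Reachable a b → (a : B) ∈ C → (b : B) ∈ C)
    {a b : B} (ha : a ∈ C) (hb : b ∉ S ∪ C) : M a b = 0 := by
  by_contra hab
  obtain ⟨hbS, hbC⟩ := not_or.mp hb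
  have hadj : (cGraph M).Adj a b := ⟨fun h => hbC (h ▸ ha), hab⟩
  exact hbC (hC ⟨a, hCS ha⟩ ⟨b, hbS⟩ (SimpleGraph.Adj.reachable hadj) ha)

theorem ofSubtype_mem_wAut {S T : Set B} [DecidablePred (· ∈ T)] {σ : Perm T}
    (hσ : σ ∈ wAut (M.restrict T)) (hS : ∀ a : T, (a : B) ∈ S → σ a = a)
    (hsep : ∀ a ∈ T, a ∉ S → ∀ b ∉ T, M a b = 0) : Perm.ofSubtype σ ∈ wAut M := by
  have hmaps : ∀ a : T, (a : B) ∉ S → (σ a : B) ∉ S := fun a ha h => by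
    rw [σ.injective (hS _ h)] at h
    exact ha h
  have hmixed : ∀ a ∈ T, ∀ b ∉ T, M (Perm.ofSubtype σ a) (Perm.ofSubtype σ b) = M a b := by
    intro a ha b hb
    rw [Perm.ofSubtype_apply_of_mem σ ha, Perm.ofSubtype_apply_of_not_mem σ hb]
    by_cases haS : a ∈ S
    · rw [hS ⟨a, ha⟩ haS]
    · rw [hsep a ha haS b hb, hsep _ (σ ⟨a, ha⟩).2 (hmaps ⟨a, ha⟩ haS) b hb]
  intro a b
  by_cases ha : a ∈ T <;> by_cases hb : b ∈ T
  · rw [Perm.ofSubtype_apply_of_mem σ ha, Perm.ofSubtype_apply_of_mem σ hb]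
    exact hσ ⟨a, ha⟩ ⟨b, hb⟩
  · exact hmixed a ha b hb
  · rw [M.symmetric, M.symmetric a]
    exact hmixed b hb a ha
  · rw [Perm.ofSubtype_apply_of_not_mem σ ha, Perm.ofSubtype_apply_of_not_mem σ hb]

theorem exists_fixing_starSet_of_isGoodSepSet {S : Set B} (h : IsGoodSepSet M S) :
    ∃ x, ∃ σ ∈ wAut M, σ ≠ 1 ∧ ∀ y ∈ starSet M x, σ y = y := by
  classical
  obtain ⟨_, ⟨-, -, C, rfl, hCS, -, ⟨x, hxS, hxC⟩, hC⟩, σ, hσ1, hσ, hσS⟩ := h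
  have hsep : ∀ a ∈ C, ∀ b ∉ S ∪ C, M a b = 0 := fun a ha b hb =>
    weight_eq_zero_of_reachable_closed M hCS hC ha hb
  have hx : x ∉ S ∪ C := not_or.mpr ⟨hxS, hxC⟩
  refine ⟨x, Perm.ofSubtype σ,
    ofSubtype_mem_wAut M hσ hσS fun a ha haS => hsep a (ha.resolve_left haS),
    fun h => hσ1 (Perm.ofSubtype_injective (h.trans (map_one _).symm)), ?_⟩
  rintro y (rfl | hy)
  · exact Perm.ofSubtype_apply_of_not_mem σ hx
  by_cases hyT : y ∈ S ∪ C
  · rcases hyT with hyS | hyC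
    · rw [Perm.ofSubtype_apply_of_mem σ (Or.inl hyS), hσS ⟨y, Or.inl hyS⟩ hyS]
    · exact absurd (hsep y hyC x hx) (M.symmetric x y ▸ hy.2)
  · exact Perm.ofSubtype_apply_of_not_mem σ hyT

theorem isGoodSepSet_iff_exists_ne_agreeing {S : Set B} :
    IsGoodSepSet M S ↔ ∃ Γ₁ : Set B, IsFactor M S Γ₁ ∧
      ∃ σ τ : Perm ↥Γ₁, (∀ a b : ↥Γ₁, M ((σ a : B)) ((σ b : B)) = M (a : B) (b : B)) ∧
        (∀ a b : ↥Γ₁, M ((τ a : B)) ((τ b : B)) = M (a : B) (b : B)) ∧ σ ≠ τ ∧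
        ∀ a : ↥Γ₁, (a : B) ∈ S → σ a = τ a := by
  refine exists_congr fun Γ₁ => and_congr_right fun _ => ?_
  have key := Perm.exists_ne_one_fixing_iff (wAut (M.restrict Γ₁)) (Subtype.val ⁻¹' S)
  constructor
  · rintro ⟨σ, hσ1, hσ, hσS⟩
    obtain ⟨σ, hσ, τ, hτ, hστ, hagree⟩ := key.mp ⟨σ, hσ, hσ1, hσS⟩
    exact ⟨σ, τ, hσ, hτ, hστ, hagree⟩
  · rintro ⟨σ, τ, hσ, hτ, hστ, hagree⟩
    obtain ⟨ρ, hρ, hρ1, hρS⟩ := key.mpr ⟨σ, hσ, τ, hτ, hστ, hagree⟩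
    exact ⟨ρ, hρ1, hρ, hρS⟩

end

theorem good_sep_set_characterisation_general {B : Type*} (M : CoxeterMatrix B) :
    ((∃ (x : B) (σ : Equiv.Perm B), (∀ a b : B, M (σ a) (σ b) = M a b) ∧ σ ≠ 1 ∧
        ∀ y ∈ starSet M x, σ y = y) ↔ (∃ S : Set B, IsGoodSepSet M S)) ∧
    ((∃ S : Set B, IsGoodSepSet M S) ↔
      ∃ (S Γ₁ : Set B), IsFactor M S Γ₁ ∧
        ∃ σ τ : Equiv.Perm ↥Γ₁, (∀ a b : ↥Γ₁, M ((σ a : B)) ((σ b : B)) = M (a : B) (b : B)) ∧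
          (∀ a b : ↥Γ₁, M ((τ a : B)) ((τ b : B)) = M (a : B) (b : B)) ∧ σ ≠ τ ∧
          ∀ a : ↥Γ₁, (a : B) ∈ S → σ a = τ a) := by
  refine ⟨⟨fun ⟨x, σ, hσ, hσ1, hstar⟩ => ⟨_, isGoodSepSet_neighborSet M hσ hσ1 hstar⟩,
    fun ⟨_, hS⟩ => exists_fixing_starSet_of_isGoodSepSet M hS⟩,
    exists_congr fun _ => isGoodSepSet_iff_exists_ne_agreeing M⟩

theorem good_sep_set_characterisation {B : Type*} [Finite B] (M : CoxeterMatrix B) :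
    ((∃ (x : B) (σ : Equiv.Perm B), (∀ a b : B, M (σ a) (σ b) = M a b) ∧ σ ≠ 1 ∧
        ∀ y ∈ starSet M x, σ y = y) ↔ (∃ S : Set B, IsGoodSepSet M S)) ∧
    ((∃ S : Set B, IsGoodSepSet M S) ↔
      ∃ (S Γ₁ : Set B), IsFactor M S Γ₁ ∧
        ∃ σ τ : Equiv.Perm ↥Γ₁, (∀ a b : ↥Γ₁, M ((σ a : B)) ((σ b : B)) = M (a : B) (b : B)) ∧
          (∀ a b : ↥Γ₁, M ((τ a : B)) ((τ b : B)) = M (a : B) (b : B)) ∧ σ ≠ τ ∧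
          ∀ a : ↥Γ₁, (a : B) ∈ S → σ a = τ a) :=
  good_sep_set_characterisation_general M
end

section
/- Let Γ be a finite weighted graph. If Γ admits a good separating set, then the automorphism group A_Γ of the Cayley graph C_Γ has uncountable vertex stabilisers; that is, for every vertex w of C_Γ, the stabiliser of w in A_Γ is uncountable. -/
/-!
Setup for Cayley graphs of Coxeter groups.

A weighted graph `Γ = (VΓ, EΓ, m)` in the sense of the paper is encoded by a Mathlib
`CoxeterMatrix B` (`B = VΓ`): the weight `m x y` is `M x y`, where the entry `0` encodes `∞`
(no relation / no edge).  The associated Coxeter group is `M.Group`, with standard generators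
`M.simple x`.
-/

open CoxeterMatrix

variable {B : Type*}

/-!
A good separating set `S` with factor `Γ₁ = S ∪ C` gives, after extending the automorphism of
`Γ₁` by the identity, a weight-preserving permutation `τ` of `VΓ` that moves some vertex but fixes
every vertex of `Γ₁` joined to a vertex outside `Γ₁`. For any union `U` of left cosets of the
special subgroup `W_{Γ₁}` there is then an automorphism `α` of `C_Γ` with `α 1 = 1` and
`α (v x) = α v · τ_v x`, where `τ_v` is `τ` for `v ∈ U` and the identity otherwise: a Coxeter
relation between `x` and `y` involves either two letters of `Γ₁`, along which membership in `U` is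
constant, or two letters fixed by `τ`, so `α` is well defined. If `τ ξ ≠ ξ` and `d ∉ Γ₁` with
`m(ξ, d) = ∞`, the cosets `(ξ d)ⁿ W_{Γ₁}` are pairwise distinct (as the Tits representation
shows), and each `f ⊆ ℕ` gives a different `α`. So the stabiliser of `1`, and by transitivity of
every vertex, is uncountable.
-/

lemma sum_range_eq_zero_of_succ_eq_mul {R : Type*} [CommRing R] [IsDomain R] {ζ : R} {m : ℕ}
    (hζ : IsPrimitiveRoot ζ m) (hm : 1 < m) {z : ℕ → R} (hz : ∀ j, z (j + 1) = ζ * z j) :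
    ∑ j ∈ Finset.range m, z j = 0 := by
  have hpow : ∀ j, z j = ζ ^ j * z 0 := by
    intro j
    induction j with
    | zero => simp
    | succ j ih => rw [hz, ih, pow_succ]; ring
  rw [Finset.sum_congr rfl fun j _ => hpow j, ← Finset.sum_mul, hζ.geom_sum_eq_zero hm, zero_mul]

lemma eq_zero_of_add_mul_eq_zero_of_add_inv_mul_eq_zero {K : Type*} [Field K] {E a b : K}
    (hE0 : E ≠ 0) (hE : E ^ 2 ≠ 1) (h : a + E * b = 0) (h' : a + E⁻¹ * b = 0) :
    a = 0 ∧ b = 0 := by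
  have hEE : E - E⁻¹ ≠ 0 := by
    intro h0
    apply hE
    field_simp at h0
    linear_combination h0
  have hb : b = 0 := by
    have : (E - E⁻¹) * b = 0 := by linear_combination h - h'
    exact (mul_eq_zero.mp this).resolve_left hEE
  exact ⟨by simpa [hb] using h, hb⟩

lemma Function.bijective_of_surjOn_exhaustion {α : Type*} {f : α → α} {s : ℕ → Set α}
    (hmono : Monotone s) (hfin : ∀ n, (s n).Finite) (hcover : ∀ a, ∃ n, a ∈ s n)
    (hmaps : ∀ n, Set.MapsTo f (s n) (s n)) (hsurj : ∀ n, Set.SurjOn f (s n) (s n)) :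
    Function.Bijective f := by
  refine ⟨fun a b hab => ?_, fun b => ?_⟩
  · obtain ⟨m, ha⟩ := hcover a
    obtain ⟨n, hb⟩ := hcover b
    have hbij := ((hfin (max m n)).surjOn_iff_bijOn_of_mapsTo (hmaps _)).mp (hsurj _)
    exact hbij.injOn (hmono (le_max_left m n) ha) (hmono (le_max_right m n) hb) hab
  · obtain ⟨n, hb⟩ := hcover b
    obtain ⟨a, -, rfl⟩ := hsurj n hb
    exact ⟨a, rfl⟩

lemma Subgroup.eq_zero_of_zpow_mem {G : Type*} [Group G] (H : Subgroup G) {g : G}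
    (hg : ∀ n : ℕ, g ^ n ∈ H → n = 0) {z : ℤ} (hz : g ^ z ∈ H) : z = 0 := by
  rcases Int.natAbs_eq z with h | h <;> rw [h] at hz ⊢
  · rw [zpow_natCast] at hz
    simp [hg _ hz]
  · rw [zpow_neg, inv_mem_iff, zpow_natCast] at hz
    simp [hg _ hz]

def Subgroup.powCosets {G : Type*} [Group G] (H : Subgroup G) (g : G) (f : Set ℕ) : Set G :=
  {v | ∃ n ∈ f, (g ^ n)⁻¹ * v ∈ H}

lemma Subgroup.mul_mem_powCosets_iff {G : Type*} [Group G] (H : Subgroup G) (g : G)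
    (f : Set ℕ) {h : G} (hh : h ∈ H) (v : G) :
    v * h ∈ H.powCosets g f ↔ v ∈ H.powCosets g f := by
  simp only [powCosets, Set.mem_ofPred_eq, ← mul_assoc, H.mul_mem_cancel_right hh]

lemma Subgroup.pow_mem_powCosets_iff {G : Type*} [Group G] (H : Subgroup G) {g : G}
    (hg : ∀ n : ℕ, g ^ n ∈ H → n = 0) (f : Set ℕ) (k : ℕ) :
    g ^ k ∈ H.powCosets g f ↔ k ∈ f := by
  refine ⟨fun ⟨n, hn, hmem⟩ => ?_, fun hk => ⟨k, hk, by simp⟩⟩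
  rw [← zpow_natCast, ← zpow_natCast, ← zpow_neg, ← zpow_add] at hmem
  have := H.eq_zero_of_zpow_mem hg hmem
  rwa [show k = n by omega]

namespace CoxeterMatrix

section GeometricRepresentation

open Matrix

variable (M : CoxeterMatrix B)

/-- The Tits cosine matrix `-cos (π / M x y)`; the entry `0` of `M` stands for `∞` and gives `-1`. -/
noncomputable def cosMatrix : Matrix B B ℂ :=
  Matrix.of fun x y => if M x y = 0 then -1 else -Complex.cos (Real.pi / M x y)

lemma cosMatrix_self (x : B) : M.cosMatrix x x = 1 := by
  simp [cosMatrix]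

lemma cosMatrix_comm (x y : B) : M.cosMatrix x y = M.cosMatrix y x := by
  simp [cosMatrix, M.symmetric x y]

section

variable [Fintype B] [DecidableEq B]

noncomputable def geomReflection (x : B) (v : B → ℂ) : B → ℂ :=
  v - (2 * (M.cosMatrix *ᵥ v) x) • Pi.single x 1

lemma cosMatrix_mulVec_geomReflection (x y : B) (v : B → ℂ) :
    (M.cosMatrix *ᵥ M.geomReflection x v) y =
      (M.cosMatrix *ᵥ v) y - 2 * (M.cosMatrix *ᵥ v) x * M.cosMatrix y x := by
  simp [geomReflection, Matrix.mulVec_sub, Matrix.mulVec_smul]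

lemma geomReflection_involutive (x : B) : Function.Involutive (M.geomReflection x) := by
  intro v
  have h := M.cosMatrix_mulVec_geomReflection x x v
  rw [cosMatrix_self] at h
  rw [geomReflection, h, geomReflection]
  module

lemma cosMatrix_mulVec_geomReflection_geomReflection {E : ℂ} (hE : E ≠ 0) {x y : B}
    (hxy : -2 * M.cosMatrix x y = E + E⁻¹) (v : B → ℂ) :
    let w := M.geomReflection x (M.geomReflection y v)
    (M.cosMatrix *ᵥ w) x + E * (M.cosMatrix *ᵥ w) y =
      E ^ 2 * ((M.cosMatrix *ᵥ v) x + E * (M.cosMatrix *ᵥ v) y) := by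
  simp only [cosMatrix_mulVec_geomReflection, cosMatrix_self, ← M.cosMatrix_comm x y]
  have ha : M.cosMatrix x y = -(E + E⁻¹) / 2 := by linear_combination hxy / (-2)
  rw [ha]
  field_simp
  ring

lemma geomReflection_geomReflection (x y : B) (v : B → ℂ) :
    M.geomReflection x (M.geomReflection y v) =
      v - (2 * (M.cosMatrix *ᵥ v) y) • Pi.single y 1
        - (2 * ((M.cosMatrix *ᵥ v) x - 2 * (M.cosMatrix *ᵥ v) y * M.cosMatrix x y)) •
          Pi.single x 1 := by
  rw [geomReflection, cosMatrix_mulVec_geomReflection, geomReflection]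

noncomputable def geomReflectionPerm (x : B) : Equiv.Perm (B → ℂ) :=
  (M.geomReflection_involutive x).toPerm

lemma geomReflectionPerm_mul_pow_apply (x y : B) (v : B → ℂ) (n : ℕ) :
    let T := M.geomReflectionPerm x * M.geomReflectionPerm y
    let u := ∑ j ∈ Finset.range n, (M.cosMatrix *ᵥ (T ^ j) v) x
    let t := ∑ j ∈ Finset.range n, (M.cosMatrix *ᵥ (T ^ j) v) y
    (T ^ n) v =
      v - (2 * t) • Pi.single y 1 - (2 * (u - 2 * t * M.cosMatrix x y)) • Pi.single x 1 := by
  intro T u t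
  have hT : ∀ w, T w = M.geomReflection x (M.geomReflection y w) := fun w => rfl
  have htele := Finset.sum_range_sub (fun j => (T ^ j) v) n
  simp only [pow_succ', Equiv.Perm.mul_apply, hT, geomReflection_geomReflection, sub_sub,
    sub_add_cancel_right, Finset.sum_neg_distrib, Finset.sum_add_distrib, ← Finset.sum_smul,
    ← Finset.mul_sum, Finset.sum_sub_distrib, ← Finset.sum_mul, pow_zero,
    Equiv.Perm.one_apply] at htele
  rw [sub_sub]
  exact (sub_eq_iff_eq_add'.mp htele.symm).trans (sub_eq_add_neg _ _).symm

lemma geomReflectionPerm_mul_pow_eq_one {x y : B} (hxy : x ≠ y) (h0 : M x y ≠ 0) :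
    (M.geomReflectionPerm x * M.geomReflectionPerm y) ^ M x y = 1 := by
  have hm : 1 < M x y := by have := M.off_diagonal x y hxy; omega
  set T := M.geomReflectionPerm x * M.geomReflectionPerm y
  set E : ℂ := Complex.exp (Real.pi * Complex.I / M x y)
  have hE0 : E ≠ 0 := Complex.exp_ne_zero _
  have hprim : IsPrimitiveRoot (E ^ 2) (M x y) := by
    convert Complex.isPrimitiveRoot_exp (M x y) (by omega) using 1
    rw [← Complex.exp_nat_mul]; congr 1; push_cast; ring
  have hcos : -2 * M.cosMatrix x y = E + E⁻¹ := by
    simp only [cosMatrix, Matrix.of_apply, if_neg h0, Complex.cos, E, ← Complex.exp_neg]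
    ring_nf
  ext v : 1
  -- `u + e * t` is multiplied by `e ^ 2`, a primitive root of unity, at each step of `T`
  have hsum : ∀ e : ℂ, e ≠ 0 → IsPrimitiveRoot (e ^ 2) (M x y) → -2 * M.cosMatrix x y = e + e⁻¹ →
      ∑ j ∈ Finset.range (M x y), (M.cosMatrix *ᵥ (T ^ j) v) x +
        e * ∑ j ∈ Finset.range (M x y), (M.cosMatrix *ᵥ (T ^ j) v) y = 0 := by
    intro e he hprim hcos
    rw [Finset.mul_sum, ← Finset.sum_add_distrib]
    refine sum_range_eq_zero_of_succ_eq_mul hprim hm fun j => ?_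
    rw [pow_succ', Equiv.Perm.mul_apply]
    exact M.cosMatrix_mulVec_geomReflection_geomReflection he hcos _
  obtain ⟨hu, ht⟩ := eq_zero_of_add_mul_eq_zero_of_add_inv_mul_eq_zero hE0 (hprim.ne_one hm)
    (hsum E hE0 hprim hcos) (hsum E⁻¹ (inv_ne_zero hE0) (by rw [inv_pow]; exact hprim.inv)
      (by rw [inv_inv, hcos, add_comm]))
  rw [M.geomReflectionPerm_mul_pow_apply, hu, ht]
  simp

lemma isLiftable_geomReflectionPerm : M.IsLiftable M.geomReflectionPerm := by
  intro x y
  rcases eq_or_ne x y with rfl | hxy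
  · rw [M.diagonal, pow_one]
    ext v : 1
    exact M.geomReflection_involutive x v
  rcases eq_or_ne (M x y) 0 with h0 | h0
  · rw [h0, pow_zero]
  · exact M.geomReflectionPerm_mul_pow_eq_one hxy h0

noncomputable def geomRep : M.Group →* Equiv.Perm (B → ℂ) :=
  M.toCoxeterSystem.lift ⟨_, M.isLiftable_geomReflectionPerm⟩

lemma geomRep_simple (x : B) : M.geomRep (M.simple x) = M.geomReflectionPerm x :=
  M.toCoxeterSystem.lift_apply_simple M.isLiftable_geomReflectionPerm x

lemma geomRep_apply_of_mem_closure {Γ : Set B} {g : M.Group}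
    (hg : g ∈ Subgroup.closure (M.simple '' Γ)) (v : B → ℂ) {b : B} (hb : b ∉ Γ) :
    M.geomRep g v b = v b := by
  induction hg using Subgroup.closure_induction generalizing v with
  | mem g hg =>
    obtain ⟨x, hx, rfl⟩ := hg
    have hbx : b ≠ x := by rintro rfl; exact hb hx
    simp [geomRep_simple, geomReflectionPerm, geomReflection, hbx]
  | one => rfl
  | mul g h _ _ ihg ihh => rw [map_mul, Equiv.Perm.mul_apply, ihg, ihh]
  | inv g _ ihg =>
    have h := ihg (M.geomRep g⁻¹ v)
    rwa [← Equiv.Perm.mul_apply, ← map_mul, mul_inv_cancel, map_one, Equiv.Perm.one_apply,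
      eq_comm] at h

end

theorem simple_injective [Finite B] : Function.Injective M.simple := by
  classical
  have := Fintype.ofFinite B
  intro x y hxy
  by_contra hne
  have h := congrFun (congrArg (fun g => M.geomRep g (Pi.single x 1)) hxy) x
  simp [geomRep_simple, geomReflectionPerm, geomReflection, cosMatrix_self, hne] at h

theorem pow_eq_zero_of_mem_closure [Finite B] {Γ : Set B} {ξ d : B}
    (hξ : ξ ∈ Γ) (hd : d ∉ Γ) (hξd : M ξ d = 0) {k : ℕ}
    (hk : (M.simple ξ * M.simple d) ^ k ∈ Subgroup.closure (M.simple '' Γ)) : k = 0 := by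
  classical
  have := Fintype.ofFinite B
  have hne : ξ ≠ d := by rintro rfl; exact hd hξ
  have ha : M.cosMatrix ξ d = -1 := by simp [cosMatrix, hξd]
  have ha' : M.cosMatrix d ξ = -1 := by rw [cosMatrix_comm, ha]
  set T := M.geomRep (M.simple ξ * M.simple d)
  -- `T ^ k` moves the `d`-coordinate of `e_d` to `1 - 2k`, while `W_Γ` does not touch it
  have hT : ∀ w, T w = M.geomReflection ξ (M.geomReflection d w) := fun w => by
    simp [T, geomRep_simple, geomReflectionPerm]
  have hiter : ∀ j : ℕ, let w := (T ^ j) (Pi.single d 1)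
      (M.cosMatrix *ᵥ w) ξ = -1 ∧ (M.cosMatrix *ᵥ w) d = 1 ∧ w d = 1 - 2 * j := by
    intro j
    induction j with
    | zero => simp [cosMatrix_self, ha]
    | succ j ih =>
      obtain ⟨hu, ht, hw⟩ := ih
      rw [pow_succ', Equiv.Perm.mul_apply, hT]
      refine ⟨?_, ?_, ?_⟩
      · simp only [cosMatrix_mulVec_geomReflection, hu, ht, ha, cosMatrix_self]
        norm_num
      · simp only [cosMatrix_mulVec_geomReflection, hu, ht, ha, ha', cosMatrix_self]
        norm_num
      · simp [geomReflection_geomReflection, hu, ht, hw, ha, hne.symm]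
        ring
  have := (hiter k).2.2
  rw [← map_pow, M.geomRep_apply_of_mem_closure hk _ hd] at this
  rw [Pi.single_eq_same] at this
  have hk0 : (k : ℂ) = 0 := by linear_combination this / 2
  exact_mod_cast hk0

end GeometricRepresentation

section Twist

variable (M : CoxeterMatrix B)

/-- The shape of an automorphism of a factor `Γ` fixing its separating set, extended by the
identity. -/
structure IsTwist (Γ : Set B) (τ : Equiv.Perm B) : Prop where
  map_apply_apply : ∀ x y, M (τ x) (τ y) = M x y
  apply_of_notMem : ∀ x ∉ Γ, τ x = x
  apply_of_ne_zero : ∀ x ∈ Γ, ∀ y ∉ Γ, M x y ≠ 0 → τ x = x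

variable {M} {Γ : Set B} {τ : Equiv.Perm B}

lemma IsTwist.apply_eq_self_of_ne_zero (hτ : M.IsTwist Γ τ) {x y : B} (h0 : M x y ≠ 0)
    (hΓ : ¬(x ∈ Γ ∧ y ∈ Γ)) : τ x = x ∧ τ y = y := by
  by_cases hx : x ∈ Γ <;> by_cases hy : y ∈ Γ
  · exact absurd ⟨hx, hy⟩ hΓ
  · exact ⟨hτ.apply_of_ne_zero x hx y hy h0, hτ.apply_of_notMem y hy⟩
  · exact ⟨hτ.apply_of_notMem x hx, hτ.apply_of_ne_zero y hy x hx (by rwa [M.symmetric])⟩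
  · exact ⟨hτ.apply_of_notMem x hx, hτ.apply_of_notMem y hy⟩

open Classical in
/-- The local action at `v` of the twisted automorphism. -/
noncomputable def twistLabel {W : Type*} (τ : Equiv.Perm B) (U : Set W) (v : W) :
    Equiv.Perm B :=
  if v ∈ U then τ else 1

lemma twistLabel_apply_of_apply_eq_self {W : Type*} {U : Set W} {x : B} (h : τ x = x) (v : W) :
    twistLabel τ U v x = x := by
  unfold twistLabel; split_ifs <;> simp [h]

lemma IsTwist.map_twistLabel {W : Type*} {U : Set W} (hτ : M.IsTwist Γ τ) (v : W) (x y : B) :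
    M (twistLabel τ U v x) (twistLabel τ U v y) = M x y := by
  unfold twistLabel; split_ifs
  · exact hτ.map_apply_apply x y
  · rfl

variable (M) in
structure IsTwistOn (Γ : Set B) (τ : Equiv.Perm B) (U : Set M.Group) : Prop
    extends M.IsTwist Γ τ where
  mul_simple_mem_iff : ∀ v, ∀ x ∈ Γ, v * M.simple x ∈ U ↔ v ∈ U

variable {U : Set M.Group}

lemma IsTwistOn.twistLabel_mul_simple (h : M.IsTwistOn Γ τ U) {x : B} (hx : x ∈ Γ) (v : M.Group) :
    twistLabel τ U (v * M.simple x) = twistLabel τ U v := by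
  unfold twistLabel
  by_cases hv : v ∈ U <;> simp [hv, h.mul_simple_mem_iff v x hx]

lemma IsTwistOn.twistLabel_mul_simple_apply_self (h : M.IsTwistOn Γ τ U) (v : M.Group) (x : B) :
    twistLabel τ U (v * M.simple x) x = twistLabel τ U v x := by
  by_cases hx : x ∈ Γ
  · rw [h.twistLabel_mul_simple hx]
  · simp only [twistLabel_apply_of_apply_eq_self (h.apply_of_notMem x hx)]

noncomputable def IsTwistOn.step (h : M.IsTwistOn Γ τ U) (x : B) :
    Equiv.Perm (M.Group × M.Group) :=
  Function.Involutive.toPerm (fun p => (p.1 * M.simple x, p.2 * M.simple (twistLabel τ U p.1 x)))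
    fun p => by
      dsimp only
      rw [h.twistLabel_mul_simple_apply_self]
      simp only [← M.toCoxeterSystem_simple, CoxeterSystem.simple_mul_simple_cancel_right]

lemma IsTwistOn.step_apply (h : M.IsTwistOn Γ τ U) (x : B) (v u : M.Group) :
    h.step x (v, u) = (v * M.simple x, u * M.simple (twistLabel τ U v x)) := rfl

lemma IsTwistOn.step_mul_step_pow_apply (h : M.IsTwistOn Γ τ U) {x y : B}
    (hinv : ∀ w, ∀ z ∈ ({x, y} : Set B), ∀ z' ∈ ({x, y} : Set B),
      twistLabel τ U (w * M.simple z) z' = twistLabel τ U w z') (v u : M.Group) (k : ℕ) :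
    ((h.step x * h.step y) ^ k) (v, u) = (v * (M.simple y * M.simple x) ^ k,
      u * (M.simple (twistLabel τ U v y) * M.simple (twistLabel τ U v x)) ^ k) := by
  have hlabel : ∀ k : ℕ, ∀ z' ∈ ({x, y} : Set B),
      twistLabel τ U (v * (M.simple y * M.simple x) ^ k) z' = twistLabel τ U v z' := by
    intro k
    induction k with
    | zero => simp
    | succ k ih =>
      intro z' hz'
      rw [pow_succ, ← mul_assoc, ← mul_assoc, hinv _ x (by simp) z' hz', hinv _ y (by simp) z' hz',
        ih z' hz']
  induction k with
  | zero => simp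
  | succ k ih =>
    rw [pow_succ', Equiv.Perm.mul_apply, ih, Equiv.Perm.mul_apply, step_apply, step_apply,
      hlabel k y (by simp), hinv _ y (by simp) x (by simp), hlabel k x (by simp)]
    simp only [pow_succ, mul_assoc]

lemma IsTwistOn.isLiftable_step (h : M.IsTwistOn Γ τ U) : M.IsLiftable h.step := by
  intro x y
  rcases eq_or_ne x y with rfl | hxy
  · rw [M.diagonal, pow_one]
    ext p : 1
    exact (h.step x).left_inv p
  rcases eq_or_ne (M x y) 0 with h0 | h0
  · rw [h0, pow_zero]
  have hinv : ∀ w, ∀ z ∈ ({x, y} : Set B), ∀ z' ∈ ({x, y} : Set B),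
      twistLabel τ U (w * M.simple z) z' = twistLabel τ U w z' := by
    by_cases hΓ : x ∈ Γ ∧ y ∈ Γ
    · rintro w z (rfl | rfl) z' -
      · rw [h.twistLabel_mul_simple hΓ.1]
      · rw [h.twistLabel_mul_simple hΓ.2]
    · obtain ⟨hτx, hτy⟩ := h.apply_eq_self_of_ne_zero h0 hΓ
      rintro w z - z' (rfl | rfl) <;>
        simp only [twistLabel_apply_of_apply_eq_self hτx, twistLabel_apply_of_apply_eq_self hτy]
  ext ⟨v, u⟩ : 1
  rw [h.step_mul_step_pow_apply hinv]
  nth_rw 2 [← h.map_twistLabel (U := U) v x y]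
  simp only [← M.toCoxeterSystem_simple, CoxeterSystem.simple_mul_simple_pow', mul_one,
    Equiv.Perm.one_apply]

noncomputable def IsTwistOn.stepHom (h : M.IsTwistOn Γ τ U) :
    M.Group →* Equiv.Perm (M.Group × M.Group) :=
  M.toCoxeterSystem.lift ⟨h.step, h.isLiftable_step⟩

lemma IsTwistOn.stepHom_simple (h : M.IsTwistOn Γ τ U) (x : B) :
    h.stepHom (M.simple x) = h.step x :=
  M.toCoxeterSystem.lift_apply_simple h.isLiftable_step x

lemma IsTwistOn.stepHom_apply_fst (h : M.IsTwistOn Γ τ U) (g : M.Group) (p : M.Group × M.Group) :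
    (h.stepHom g p).1 = p.1 * g⁻¹ := by
  induction g using M.toCoxeterSystem.simple_induction generalizing p with
  | simple x =>
    rw [M.toCoxeterSystem_simple, stepHom_simple, ← M.toCoxeterSystem_simple,
      CoxeterSystem.inv_simple]
    rfl
  | one => simp
  | mul g g' hg hg' => rw [map_mul, Equiv.Perm.mul_apply, hg, hg', mul_inv_rev, mul_assoc]

/-- `stepHom g⁻¹ (1, 1) = (g, twistMap g)`: the second coordinate follows the first one along
the twisted edge labels. -/
noncomputable def IsTwistOn.twistMap (h : M.IsTwistOn Γ τ U) (g : M.Group) : M.Group :=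
  (h.stepHom g⁻¹ (1, 1)).2

lemma IsTwistOn.twistMap_one (h : M.IsTwistOn Γ τ U) : h.twistMap 1 = 1 := by
  simp [twistMap]

lemma IsTwistOn.twistMap_mul_simple (h : M.IsTwistOn Γ τ U) (v : M.Group) (x : B) :
    h.twistMap (v * M.simple x) = h.twistMap v * M.simple (twistLabel τ U v x) := by
  have hfst : (h.stepHom v⁻¹ (1, 1)).1 = v := by rw [stepHom_apply_fst, inv_inv, one_mul]
  rw [twistMap, mul_inv_rev, ← M.toCoxeterSystem_simple, CoxeterSystem.inv_simple,
    M.toCoxeterSystem_simple, map_mul, Equiv.Perm.mul_apply,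
    stepHom_simple, ← Prod.mk.eta (p := h.stepHom v⁻¹ (1, 1)), step_apply, hfst]
  rfl

lemma IsTwistOn.exists_twistMap_wordProd (h : M.IsTwistOn Γ τ U) (ω : List B) :
    ∃ ω' : List B, ω'.length = ω.length ∧
      h.twistMap (M.toCoxeterSystem.wordProd ω) = M.toCoxeterSystem.wordProd ω' := by
  induction ω using List.reverseRecOn with
  | nil => exact ⟨[], rfl, by simp [twistMap_one]⟩
  | append_singleton ω x ih =>
    obtain ⟨ω', hlen, hω'⟩ := ih
    refine ⟨ω' ++ [twistLabel τ U (M.toCoxeterSystem.wordProd ω) x], by simp [hlen], ?_⟩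
    simp [CoxeterSystem.wordProd_append, twistMap_mul_simple, hω']

lemma IsTwistOn.exists_twistMap_eq_wordProd (h : M.IsTwistOn Γ τ U) (ω : List B) :
    ∃ ω' : List B, ω'.length = ω.length ∧
      h.twistMap (M.toCoxeterSystem.wordProd ω') = M.toCoxeterSystem.wordProd ω := by
  induction ω using List.reverseRecOn with
  | nil => exact ⟨[], rfl, by simp [twistMap_one]⟩
  | append_singleton ω x ih =>
    obtain ⟨ω', hlen, hω'⟩ := ih
    refine ⟨ω' ++ [(twistLabel τ U (M.toCoxeterSystem.wordProd ω')).symm x], by simp [hlen], ?_⟩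
    simp [CoxeterSystem.wordProd_append, twistMap_mul_simple, hω']

lemma IsTwistOn.bijective_twistMap [Finite B] (h : M.IsTwistOn Γ τ U) :
    Function.Bijective h.twistMap := by
  refine Function.bijective_of_surjOn_exhaustion
    (s := fun n => M.toCoxeterSystem.wordProd '' {ω | ω.length ≤ n})
    (fun m n hmn => Set.image_mono fun ω (hω : ω.length ≤ m) => hω.trans hmn)
    (fun n => (List.finite_length_le B n).image _)
    (fun g => ?_) (fun n => ?_) (fun n => ?_)
  · obtain ⟨ω, rfl⟩ := M.toCoxeterSystem.wordProd_surjective g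
    exact ⟨ω.length, ω, (le_refl ω.length :), rfl⟩
  · rintro _ ⟨ω, hω, rfl⟩
    obtain ⟨ω', hlen, hω'⟩ := h.exists_twistMap_wordProd ω
    exact ⟨ω', show ω'.length ≤ n from hlen ▸ hω, hω'.symm⟩
  · rintro _ ⟨ω, hω, rfl⟩
    obtain ⟨ω', hlen, hω'⟩ := h.exists_twistMap_eq_wordProd ω
    exact ⟨_, ⟨ω', show ω'.length ≤ n from hlen ▸ hω, rfl⟩, hω'⟩

lemma IsTwistOn.cayley_adj_twistMap_iff [Finite B] (h : M.IsTwistOn Γ τ U) (a b : M.Group) :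
    (cayley M).Adj (h.twistMap a) (h.twistMap b) ↔ (cayley M).Adj a b := by
  have hinj := h.bijective_twistMap.injective
  constructor
  · rintro ⟨hne, y, hy⟩
    set x := (twistLabel τ U a).symm y
    have hb : b = a * M.simple x := hinj (by simp [hy, twistMap_mul_simple, x])
    exact ⟨fun hab => hne (congrArg h.twistMap hab), x, hb⟩
  · rintro ⟨hne, x, rfl⟩
    exact ⟨hinj.ne hne, twistLabel τ U a x, h.twistMap_mul_simple a x⟩

noncomputable def IsTwistOn.twistAut [Finite B] (h : M.IsTwistOn Γ τ U) : graphAut (cayley M) :=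
  ⟨Equiv.ofBijective h.twistMap h.bijective_twistMap, h.cayley_adj_twistMap_iff⟩

lemma IsTwistOn.twistAut_mem_stabilizer [Finite B] (h : M.IsTwistOn Γ τ U) :
    h.twistAut ∈ MulAction.stabilizer (graphAut (cayley M)) (1 : M.Group) :=
  h.twistMap_one

lemma IsTwist.isTwistOn_powCosets (hτ : M.IsTwist Γ τ) (g : M.Group) (f : Set ℕ) :
    M.IsTwistOn Γ τ ((Subgroup.closure (M.simple '' Γ)).powCosets g f) :=
  { hτ with
    mul_simple_mem_iff := fun v _ hx =>
      Subgroup.mul_mem_powCosets_iff _ g f (Subgroup.subset_closure (Set.mem_image_of_mem _ hx)) v }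

lemma twistLabel_congr {W : Type*} {U U' : Set W} {v : W} (hv : v ∈ U ↔ v ∈ U') :
    twistLabel τ U v = twistLabel τ U' v := by
  unfold twistLabel
  by_cases h : v ∈ U <;> simp [h, ← hv]

variable {U' : Set M.Group} {ξ d : B}

lemma IsTwistOn.twistMap_pow_eq (h : M.IsTwistOn Γ τ U) (h' : M.IsTwistOn Γ τ U') (hd : τ d = d)
    {n : ℕ} (hagree : ∀ j < n,
      ((M.simple ξ * M.simple d) ^ j ∈ U ↔ (M.simple ξ * M.simple d) ^ j ∈ U')) :
    h.twistMap ((M.simple ξ * M.simple d) ^ n) = h'.twistMap ((M.simple ξ * M.simple d) ^ n) := by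
  induction n with
  | zero => rw [pow_zero, twistMap_one, twistMap_one]
  | succ n ih =>
    rw [pow_succ, ← mul_assoc, twistMap_mul_simple, twistMap_mul_simple, twistMap_mul_simple,
      twistMap_mul_simple, ih fun j hj => hagree j (by omega),
      twistLabel_congr (hagree n (by omega)), twistLabel_apply_of_apply_eq_self hd,
      twistLabel_apply_of_apply_eq_self hd]

lemma IsTwistOn.twistMap_ne [Finite B] (h : M.IsTwistOn Γ τ U) (h' : M.IsTwistOn Γ τ U')
    (hξ : τ ξ ≠ ξ) (hd : τ d = d) {n : ℕ}
    (hagree : ∀ j < n,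
      ((M.simple ξ * M.simple d) ^ j ∈ U ↔ (M.simple ξ * M.simple d) ^ j ∈ U'))
    (hn : ¬((M.simple ξ * M.simple d) ^ n ∈ U ↔ (M.simple ξ * M.simple d) ^ n ∈ U')) :
    h.twistMap ((M.simple ξ * M.simple d) ^ n * M.simple ξ) ≠
      h'.twistMap ((M.simple ξ * M.simple d) ^ n * M.simple ξ) := by
  rw [twistMap_mul_simple, twistMap_mul_simple, h.twistMap_pow_eq h' hd hagree, Ne,
    mul_right_inj, M.simple_injective.eq_iff]
  by_cases hU : (M.simple ξ * M.simple d) ^ n ∈ U <;>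
    by_cases hU' : (M.simple ξ * M.simple d) ^ n ∈ U'
  · exact absurd (iff_of_true hU hU') hn
  · simpa [twistLabel, hU, hU'] using hξ
  · simpa [twistLabel, hU, hU'] using hξ.symm
  · exact absurd (iff_of_false hU hU') hn

lemma IsTwist.injective_twistAut_powCosets [Finite B] (hτ : M.IsTwist Γ τ) (hξ : τ ξ ≠ ξ)
    (hd : d ∉ Γ) (hξd : M ξ d = 0) :
    Function.Injective fun f : Set ℕ =>
      (hτ.isTwistOn_powCosets (M.simple ξ * M.simple d) f).twistAut := by
  classical
  have hξΓ : ξ ∈ Γ := by_contra fun h => hξ (hτ.apply_of_notMem ξ h)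
  have hmem : ∀ f k, (M.simple ξ * M.simple d) ^ k ∈
      (Subgroup.closure (M.simple '' Γ)).powCosets (M.simple ξ * M.simple d) f ↔ k ∈ f :=
    Subgroup.pow_mem_powCosets_iff _ fun k hk => M.pow_eq_zero_of_mem_closure hξΓ hd hξd hk
  intro f f' hff'
  by_contra hne
  have hex : ∃ n, ¬(n ∈ f ↔ n ∈ f') := by
    by_contra! h
    exact hne (Set.ext h)
  set g := M.simple ξ * M.simple d
  refine (hτ.isTwistOn_powCosets g f).twistMap_ne (hτ.isTwistOn_powCosets g f') hξ
    (hτ.apply_of_notMem d hd) (n := Nat.find hex) (fun j hj => ?_) ?_ ?_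
  · rw [hmem, hmem]
    exact not_not.mp (Nat.find_min hex hj)
  · rw [hmem, hmem]
    exact Nat.find_spec hex
  · exact congrArg (fun α : graphAut (cayley M) => (α : Equiv.Perm M.Group) _) hff'

end Twist

variable (M : CoxeterMatrix B)

lemma eq_zero_of_mem_of_notMem_union {S C : Set B} (hCS : C ⊆ Sᶜ)
    (hreach : ∀ x y : ↥(Sᶜ), ((cGraph M).induce Sᶜ).Reachable x y → (x : B) ∈ C → (y : B) ∈ C)
    {c b : B} (hc : c ∈ C) (hb : b ∉ S ∪ C) : M c b = 0 := by
  by_contra h0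
  have hbS : b ∉ S := fun h => hb (Or.inl h)
  have hadj : ((cGraph M).induce Sᶜ).Adj ⟨c, hCS hc⟩ ⟨b, hbS⟩ :=
    ⟨fun hcb => hb (Or.inr ((show c = b from hcb) ▸ hc)), h0⟩
  exact hb (Or.inr (hreach _ _ hadj.reachable hc))

open Classical in
lemma isTwist_ofSubtype {S C : Set B} (hCS : C ⊆ Sᶜ) (hsep : ∀ c ∈ C, ∀ b ∉ S ∪ C, M c b = 0)
    {σ : Equiv.Perm ↥(S ∪ C)} (hσM : ∀ a b : ↥(S ∪ C), M (σ a) (σ b) = M a b)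
    (hσS : ∀ a : ↥(S ∪ C), (a : B) ∈ S → σ a = a) :
    M.IsTwist (S ∪ C) (Equiv.Perm.ofSubtype σ) := by
  set τ := Equiv.Perm.ofSubtype σ
  have hτΓ : ∀ a : ↥(S ∪ C), τ a = σ a := fun a => Equiv.Perm.ofSubtype_apply_of_mem σ a.2
  have hout : ∀ x ∉ S ∪ C, τ x = x := fun x hx => Equiv.Perm.ofSubtype_apply_of_not_mem σ hx
  have hτS : ∀ x ∈ S, τ x = x := fun x hx => by
    rw [hτΓ ⟨x, Or.inl hx⟩, hσS _ hx]
  have hτC : ∀ x ∈ C, τ x ∈ C := fun x hx => by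
    rw [hτΓ ⟨x, Or.inr hx⟩]
    refine (σ ⟨x, Or.inr hx⟩).2.resolve_left fun hS => hCS hx ?_
    have := σ.injective (hσS _ hS)
    rwa [this] at hS
  have hcross : ∀ x ∈ S ∪ C, ∀ y ∉ S ∪ C, M (τ x) (τ y) = M x y := by
    rintro x (hxS | hxC) y hy
    · rw [hτS x hxS, hout y hy]
    · rw [hout y hy, hsep x hxC y hy, hsep _ (hτC x hxC) y hy]
  refine ⟨fun x y => ?_, hout, fun x hx y hy h0 => ?_⟩
  · by_cases hx : x ∈ S ∪ C <;> by_cases hy : y ∈ S ∪ C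
    · rw [hτΓ ⟨x, hx⟩, hτΓ ⟨y, hy⟩]
      exact hσM ⟨x, hx⟩ ⟨y, hy⟩
    · exact hcross x hx y hy
    · rw [M.symmetric, hcross y hy x hx, M.symmetric]
    · rw [hout x hx, hout y hy]
  · exact hx.elim (hτS x) fun hxC => absurd (hsep x hxC y hy) h0

lemma exists_isTwist_of_isGoodSepSet {S : Set B} (hS : IsGoodSepSet M S) :
    ∃ (Γ : Set B) (τ : Equiv.Perm B), M.IsTwist Γ τ ∧ ∃ ξ d, τ ξ ≠ ξ ∧ d ∉ Γ ∧ M ξ d = 0 := by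
  classical
  obtain ⟨_, ⟨-, -, C, rfl, hCS, -, ⟨d, hdS, hdC⟩, hreach⟩, σ, hσ1, hσM, hσS⟩ := hS
  have hsep : ∀ c ∈ C, ∀ b ∉ S ∪ C, M c b = 0 := fun c hc b hb =>
    M.eq_zero_of_mem_of_notMem_union hCS hreach hc hb
  obtain ⟨a, ha⟩ : ∃ a, σ a ≠ a := by
    by_contra! h
    exact hσ1 (Equiv.ext h)
  have haC : (a : B) ∈ C := a.2.resolve_left fun haS => ha (hσS a haS)
  refine ⟨S ∪ C, _, M.isTwist_ofSubtype hCS hsep hσM hσS, a, d, ?_, fun h => h.elim hdS hdC,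
    hsep a haC d fun h => h.elim hdS hdC⟩
  rw [Equiv.Perm.ofSubtype_apply_of_mem σ a.2]
  exact fun h => ha (Subtype.ext h)

lemma mulLeft_mem_graphAut_cayley (g : M.Group) : Equiv.mulLeft g ∈ graphAut (cayley M) := by
  intro u v
  simp only [cayley, Equiv.coe_mulLeft, ne_eq, mul_right_inj, mul_assoc]

theorem not_countable_stabilizer_one [Finite B] {Γ : Set B} {τ : Equiv.Perm B} {ξ d : B}
    (hτ : M.IsTwist Γ τ) (hξ : τ ξ ≠ ξ) (hd : d ∉ Γ) (hξd : M ξ d = 0) :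
    ¬ Countable ↥(MulAction.stabilizer ↥(graphAut (cayley M)) (1 : M.Group)) := by
  intro hcount
  have hinj : Function.Injective fun f : Set ℕ =>
      (⟨_, (hτ.isTwistOn_powCosets (M.simple ξ * M.simple d) f).twistAut_mem_stabilizer⟩ :
        MulAction.stabilizer ↥(graphAut (cayley M)) (1 : M.Group)) :=
    fun f f' h => hτ.injective_twistAut_powCosets hξ hd hξd (congrArg Subtype.val h)
  have := hinj.countable
  obtain ⟨e, he⟩ := Countable.exists_injective_nat (Set ℕ)
  exact Function.cantor_injective e he

end CoxeterMatrix

theorem good_sep_set_uncountable_stabilisers {B : Type*} [Finite B] (M : CoxeterMatrix B)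
    (hgood : ∃ S : Set B, IsGoodSepSet M S) (w : M.Group) :
    ¬ Countable ↥(MulAction.stabilizer ↥(graphAut (cayley M)) w) := by
  obtain ⟨S, hS⟩ := hgood
  obtain ⟨Γ, τ, hτ, ξ, d, hξ, hd, hξd⟩ := M.exists_isTwist_of_isGoodSepSet hS
  have hw : w = (⟨_, M.mulLeft_mem_graphAut_cayley w⟩ : graphAut (cayley M)) • (1 : M.Group) :=
    (mul_one w).symm
  rw [← (MulAction.stabilizerEquivStabilizer hw).toEquiv.countable_iff]
  exact M.not_countable_stabilizer_one hτ hξ hd hξd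
end
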